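/- Let P be an RFALP, 𝔄_P its associated SETAF, and P_{𝔄_P} the NLP associated with 𝔄_P. Then P = P_{𝔄_P}. -/
import Mathlib


/-- A rule of a normal logic program:
`head ← bodyPos, not bodyNeg`. -/
structure Rule (α : Type) where
  head : α
  bodyPos : Finset α
  bodyNeg : Finset α
deriving DecidableEq

/-- A normal logic program (NLP): a finite set of rules. -/
abbrev NLP (α : Type) := Finset (Rule α)

variable {α : Type} [DecidableEq α]

/-- The atoms occurring in a rule. -/
def Rule.atoms (r : Rule α) : Finset α :=
  insert r.head (r.bodyPos ∪ r.bodyNeg)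

/-- The Herbrand base of a program: all atoms occurring in it. -/
def HB (P : NLP α) : Finset α := P.sup Rule.atoms

/-- A three-valued interpretation, given by its sets of true and false atoms. -/
structure Interp (α : Type) where
  T : Set α
  F : Set α

/-- `I` is a 3-valued interpretation over the Herbrand base `H`. -/
def IsInterp (H : Finset α) (I : Interp α) : Prop :=
  I.T ⊆ ↑H ∧ I.F ⊆ ↑H ∧ Disjoint I.T I.F

/-- A rule of a positive program obtained as a reduct; `hasU` records whether
the special atom `u` (undefined in every interpretation) occurs in its body. -/
structure PosRule (α : Type) where
  head : α
  bodyPos : Finset α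
  hasU : Prop

/-- The reduct `P/I`: delete every rule whose negative body meets `I.T`,
delete each `not b` with `b ∈ I.F`, and replace the remaining negative
literals by the special atom `u`. -/
def reduct (P : NLP α) (I : Interp α) : Set (PosRule α) :=
  { q | ∃ r ∈ P, (∀ b ∈ r.bodyNeg, b ∉ I.T) ∧
        q.head = r.head ∧ q.bodyPos = r.bodyPos ∧
        (q.hasU ↔ ∃ b ∈ r.bodyNeg, b ∉ I.F) }

/-- The `Ψ` operator of a positive program `Q` relative to the Herbrand base
`H`; the special atom `u` is neither true nor false in any interpretation. -/
def PsiOp (H : Finset α) (Q : Set (PosRule α)) (J : Interp α) : Interp α where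
  T := { c | c ∈ H ∧ ∃ q ∈ Q, q.head = c ∧ ¬ q.hasU ∧ ∀ a ∈ q.bodyPos, a ∈ J.T }
  F := { c | c ∈ H ∧ ∀ q ∈ Q, q.head = c → ∃ a ∈ q.bodyPos, a ∈ J.F }

/-- Iteration of `Ψ` starting from `⟨∅, H⟩`. -/
def PsiIter (H : Finset α) (Q : Set (PosRule α)) : ℕ → Interp α
  | 0 => ⟨∅, ↑H⟩
  | n + 1 => PsiOp H Q (PsiIter H Q n)

/-- `Ω_P(I)`: the least three-valued model of the reduct `P/I`,
obtained as the `ω`-iteration of `Ψ`. -/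
def OmegaOp (H : Finset α) (P : NLP α) (I : Interp α) : Interp α where
  T := ⋃ n, (PsiIter H (reduct P I) n).T
  F := ⋂ n, (PsiIter H (reduct P I) n).F

/-- `I` is a partial stable model of `P` (over Herbrand base `H`). -/
def IsPSModel (H : Finset α) (P : NLP α) (I : Interp α) : Prop :=
  IsInterp H I ∧ OmegaOp H P I = I

/-- Well-founded model: a partial stable model with `⊆`-minimal true part. -/
def IsWFModel (H : Finset α) (P : NLP α) (I : Interp α) : Prop :=
  IsPSModel H P I ∧ ∀ J, IsPSModel H P J → ¬ J.T ⊂ I.T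

/-- Regular model: a partial stable model with `⊆`-maximal true part. -/
def IsRegularModel (H : Finset α) (P : NLP α) (I : Interp α) : Prop :=
  IsPSModel H P I ∧ ∀ J, IsPSModel H P J → ¬ I.T ⊂ J.T

/-- Stable model: a partial stable model with `T ∪ F = H`. -/
def IsStableModel (H : Finset α) (P : NLP α) (I : Interp α) : Prop :=
  IsPSModel H P I ∧ I.T ∪ I.F = ↑H

/-- L-stable model: a partial stable model with `⊆`-maximal `T ∪ F`. -/
def IsLStableModel (H : Finset α) (P : NLP α) (I : Interp α) : Prop :=
  IsPSModel H P I ∧ ∀ J, IsPSModel H P J → ¬ (I.T ∪ I.F) ⊂ (J.T ∪ J.F)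

/-- `IsStatement P c V R`: there is a statement of `P` with conclusion `c`,
vulnerabilities `V` and rules `R`.  A statement is built from a rule
`r = c ← a₁,…,a_m, not b₁,…,not b_n ∈ P` together with statements `sᵢ` for the
positive body atoms `aᵢ` (with `r` not among their rules); its vulnerabilities
are `Vul(s₁) ∪ … ∪ Vul(s_m) ∪ {b₁,…,b_n}` and its rules are
`Rules(s₁) ∪ … ∪ Rules(s_m) ∪ {r}`. -/
inductive IsStatement (P : NLP α) : α → Finset α → Finset (Rule α) → Prop where
  | mk (r : Rule α) (hr : r ∈ P) (v : α → Finset α) (ρ : α → Finset (Rule α))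
      (hsub : ∀ a ∈ r.bodyPos, IsStatement P a (v a) (ρ a))
      (hnr : ∀ a ∈ r.bodyPos, r ∉ ρ a) :
      IsStatement P r.head (r.bodyPos.biUnion v ∪ r.bodyNeg)
        (insert r (r.bodyPos.biUnion ρ))

/-- `c` is an argument of `P`: it is the conclusion of some statement. -/
def IsArg (P : NLP α) (c : α) : Prop := ∃ V R, IsStatement P c V R

open Classical in
/-- The set `A_P` of arguments of `P`. -/
noncomputable def argsOf (P : NLP α) : Finset α := (HB P).filter (IsArg P)

/-- `B` meets every vulnerability set of `a` in `P`. -/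
def HitsVul (P : NLP α) (B : Finset α) (a : α) : Prop :=
  ∀ V R, IsStatement P a V R → ∃ b ∈ B, b ∈ V

/-- A SETAF: a finite set of arguments and an attack relation between
finite sets of arguments and arguments. -/
structure SETAF (α : Type) where
  args : Finset α
  att : Finset α → α → Prop

/-- Well-formedness of a SETAF: attackers are nonempty sets of arguments
attacking arguments, and attacking sets are `⊆`-minimal. -/
def SETAF.Wf (S : SETAF α) : Prop :=
  (∀ B a, S.att B a → B.Nonempty ∧ B ⊆ S.args ∧ a ∈ S.args) ∧
  (∀ B a, S.att B a → ∀ B', B' ⊂ B → ¬ S.att B' a)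

/-- The SETAF `𝔄_P` associated with an NLP `P`: its arguments are the
conclusions of the statements of `P`, and `B` attacks `a` iff `B` is a
`⊆`-minimal set of arguments meeting every vulnerability set of `a`. -/
noncomputable def setafOf (P : NLP α) : SETAF α where
  args := argsOf P
  att := fun B a =>
    B ⊆ argsOf P ∧ a ∈ argsOf P ∧ HitsVul P B a ∧ ∀ B', B' ⊂ B → ¬ HitsVul P B' a

/-- Labels for arguments. -/
inductive Lab : Type
  | inn | out | und
deriving DecidableEq

/-- `in(L)`. -/
def labIn (S : SETAF α) (L : α → Lab) : Set α := { a | a ∈ S.args ∧ L a = Lab.inn }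

/-- `out(L)`. -/
def labOut (S : SETAF α) (L : α → Lab) : Set α := { a | a ∈ S.args ∧ L a = Lab.out }

/-- `undec(L)`. -/
def labUnd (S : SETAF α) (L : α → Lab) : Set α := { a | a ∈ S.args ∧ L a = Lab.und }

/-- Admissible labelling. -/
def AdmissibleLab (S : SETAF α) (L : α → Lab) : Prop :=
  ∀ a ∈ S.args,
    (L a = Lab.inn → ∀ B, S.att B a → ∃ b ∈ B, L b = Lab.out) ∧
    (L a = Lab.out → ∃ B, S.att B a ∧ ∀ b ∈ B, L b = Lab.inn)

/-- Complete labelling. -/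
def CompleteLab (S : SETAF α) (L : α → Lab) : Prop :=
  AdmissibleLab S L ∧
  ∀ a ∈ S.args, L a = Lab.und →
    (∃ B, S.att B a ∧ ∀ b ∈ B, L b ≠ Lab.out) ∧
    (∀ B, S.att B a → ∃ b ∈ B, L b ≠ Lab.inn)

/-- Grounded labelling: complete with `⊆`-minimal `in(L)`. -/
def GroundedLab (S : SETAF α) (L : α → Lab) : Prop :=
  CompleteLab S L ∧ ∀ L', CompleteLab S L' → ¬ labIn S L' ⊂ labIn S L

/-- Preferred labelling: complete with `⊆`-maximal `in(L)`. -/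
def PreferredLab (S : SETAF α) (L : α → Lab) : Prop :=
  CompleteLab S L ∧ ∀ L', CompleteLab S L' → ¬ labIn S L ⊂ labIn S L'

/-- Stable labelling: complete with `undec(L) = ∅`. -/
def StableLab (S : SETAF α) (L : α → Lab) : Prop :=
  CompleteLab S L ∧ labUnd S L = ∅

/-- Semi-stable labelling: complete with `⊆`-minimal `undec(L)`. -/
def SemiStableLab (S : SETAF α) (L : α → Lab) : Prop :=
  CompleteLab S L ∧ ∀ L', CompleteLab S L' → ¬ labUnd S L' ⊂ labUnd S L

/-- `L2I_P`: the interpretation associated with a labelling of `𝔄_P`. -/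
def L2I (P : NLP α) (L : α → Lab) : Interp α where
  T := { c | c ∈ HB P ∧ c ∈ argsOf P ∧ L c = Lab.inn }
  F := { c | c ∈ HB P ∧ (c ∉ argsOf P ∨ (c ∈ argsOf P ∧ L c = Lab.out)) }

open Classical in
/-- `I2L`: the labelling associated with an interpretation (meaningful on
the arguments). -/
noncomputable def I2L (I : Interp α) : α → Lab := fun c =>
  if c ∈ I.T then Lab.inn else if c ∈ I.F then Lab.out else Lab.und

/-- `L2I_𝔄`: the interpretation `⟨in(L), out(L)⟩` associated with a labelling
of a SETAF `𝔄`. -/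
def L2Iset (S : SETAF α) (L : α → Lab) : Interp α := ⟨labIn S L, labOut S L⟩

/-- `V` meets every attacker of `a` in `S`. -/
def HitsAtt (S : SETAF α) (a : α) (V : Finset α) : Prop :=
  ∀ B, S.att B a → ∃ b ∈ B, b ∈ V

/-- `V ∈ V_a`: a `⊆`-minimal set of arguments meeting every attacker of `a`. -/
def MemVa (S : SETAF α) (a : α) (V : Finset α) : Prop :=
  V ⊆ S.args ∧ HitsAtt S a V ∧ ∀ V', V' ⊂ V → ¬ HitsAtt S a V'

open Classical in
/-- The NLP `P_𝔄` associated with a SETAF `𝔄`: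
`{ a ← not b₁,…,not b_n | a ∈ A, {b₁,…,b_n} ∈ V_a }`. -/
noncomputable def nlpOf (S : SETAF α) : NLP α :=
  ((S.args ×ˢ S.args.powerset).filter (fun p => MemVa S p.1 p.2)).image
    (fun p => { head := p.1, bodyPos := ∅, bodyNeg := p.2 })

/-- Redundancy-Free Atomic Logic Program: every rule is atomic (no positive
body), every atom is a head, and no rule's negative body strictly contains
that of another rule with the same head. -/
def IsRFALP (P : NLP α) : Prop :=
  (∀ r ∈ P, r.bodyPos = ∅) ∧
  HB P = P.image Rule.head ∧
  ∀ r ∈ P, ∀ r' ∈ P, r'.head = r.head → ¬ r'.bodyNeg ⊂ r.bodyNeg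

/-- Unfolding: replace a rule `c ← a, a₁,…,a_m, not b₁,…,not b_n` by all rules
obtained by resolving `a` against the rules of the program with head `a`. -/
def StepU (P₁ P₂ : NLP α) : Prop :=
  ∃ r ∈ P₁, ∃ a ∈ r.bodyPos,
    P₂ = P₁.erase r ∪
      (P₁.filter (fun r' => r'.head = a)).image
        (fun r' => { head := r.head,
                     bodyPos := r'.bodyPos ∪ r.bodyPos.erase a,
                     bodyNeg := r'.bodyNeg ∪ r.bodyNeg })

/-- Elimination of tautologies: delete a rule whose head occurs in its
positive body. -/
def StepT (P₁ P₂ : NLP α) : Prop :=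
  ∃ r ∈ P₁, r.head ∈ r.bodyPos ∧ P₂ = P₁.erase r

/-- Positive reduction: delete a literal `not b` from the body of a rule,
where `b` is not the head of any rule of the program. -/
def StepP (P₁ P₂ : NLP α) : Prop :=
  ∃ r ∈ P₁, ∃ b ∈ r.bodyNeg, (∀ r' ∈ P₁, r'.head ≠ b) ∧
    P₂ = insert { head := r.head, bodyPos := r.bodyPos,
                  bodyNeg := r.bodyNeg.erase b } (P₁.erase r)

/-- Elimination of non-minimal rules: delete a rule subsumed by a distinct
rule with the same head and smaller bodies. -/
def StepM (P₁ P₂ : NLP α) : Prop :=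
  ∃ r ∈ P₁, ∃ r' ∈ P₁, r ≠ r' ∧ r'.head = r.head ∧
    r'.bodyPos ⊆ r.bodyPos ∧ r'.bodyNeg ⊆ r.bodyNeg ∧ P₂ = P₁.erase r

/-- `↦_UTPM`: the union of the four transformations. -/
def StepUTPM (P₁ P₂ : NLP α) : Prop :=
  StepU P₁ P₂ ∨ StepT P₁ P₂ ∨ StepP P₁ P₂ ∨ StepM P₁ P₂

/-- `P` is irreducible w.r.t. `↦_UTPM`: there is no `P' ≠ P` with
`P ↦_UTPM P'`. -/
def UTPMIrreducible (P : NLP α) : Prop :=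
  ¬ ∃ P', StepUTPM P P' ∧ P' ≠ P


section AuxStmt13
variable {α : Type} [DecidableEq α]

omit [DecidableEq α] in
lemma aux_exists_min {Q : Finset α → Prop} :
    ∀ X : Finset α, Q X → ∃ Y, Y ⊆ X ∧ Q Y ∧ ∀ Z, Z ⊂ Y → ¬ Q Z := by
  intro X
  induction X using Finset.strongInduction with
  | _ X ih =>
    intro hX
    by_cases h : ∃ Z, Z ⊂ X ∧ Q Z
    · obtain ⟨Z, hZ, hQZ⟩ := h
      obtain ⟨Y, h1, h2, h3⟩ := ih Z hZ hQZ
      exact ⟨Y, h1.trans hZ.subset, h2, h3⟩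
    · push_neg at h
      exact ⟨X, subset_rfl, hX, h⟩

lemma aux_head_mem {P : NLP α} {r : Rule α} (hr : r ∈ P) : r.head ∈ HB P :=
  Finset.mem_sup.mpr ⟨r, hr, by simp [Rule.atoms]⟩

lemma aux_bodyNeg_sub {P : NLP α} {r : Rule α} (hr : r ∈ P) : r.bodyNeg ⊆ HB P :=
  fun b hb => Finset.mem_sup.mpr ⟨r, hr, by simp [Rule.atoms, hb]⟩

lemma aux_stmt_of_rule {P : NLP α} (hP : IsRFALP P) {r : Rule α} (hr : r ∈ P) :
    IsStatement P r.head r.bodyNeg {r} := by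
  have h0 := hP.1 r hr
  have := IsStatement.mk (P := P) r hr (fun _ => ∅) (fun _ => ∅)
    (by simp [h0]) (by simp [h0])
  simpa [h0] using this

lemma aux_stmt_iff {P : NLP α} (hP : IsRFALP P) {c : α} {V : Finset α} {R : Finset (Rule α)} :
    IsStatement P c V R → ∃ r ∈ P, r.head = c ∧ r.bodyNeg = V := by
  intro h
  cases h with
  | mk r hr v ρ hsub hnr => exact ⟨r, hr, rfl, by simp [hP.1 r hr]⟩

lemma aux_args_eq {P : NLP α} (hP : IsRFALP P) : argsOf P = HB P := by
  ext c
  simp only [argsOf, Finset.mem_filter, and_iff_left_iff_imp]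
  intro hc
  rw [hP.2.1] at hc
  obtain ⟨r, hr, hrc⟩ := Finset.mem_image.mp hc
  exact ⟨r.bodyNeg, {r}, hrc ▸ aux_stmt_of_rule hP hr⟩

lemma aux_hitsVul {P : NLP α} (hP : IsRFALP P) {B : Finset α} {a : α} :
    HitsVul P B a ↔ ∀ r ∈ P, r.head = a → ∃ b ∈ B, b ∈ r.bodyNeg := by
  constructor
  · intro h r hr hra
    exact h r.bodyNeg {r} (hra ▸ aux_stmt_of_rule hP hr)
  · intro h V R hs
    obtain ⟨r, hr, h1, h2⟩ := aux_stmt_iff hP hs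
    exact h2 ▸ h r hr h1

lemma aux_ruleMemVa {P : NLP α} (hP : IsRFALP P) {r : Rule α} (hr : r ∈ P) :
    MemVa (setafOf P) r.head r.bodyNeg := by
  have hargs := aux_args_eq hP
  have hVsub : r.bodyNeg ⊆ argsOf P := by rw [hargs]; exact aux_bodyNeg_sub hr
  have hhead : r.head ∈ argsOf P := by rw [hargs]; exact aux_head_mem hr
  refine ⟨hVsub, ?_, ?_⟩
  · intro B hB
    obtain ⟨_, _, hHit, _⟩ := hB
    exact (aux_hitsVul hP).mp hHit r hr rfl
  · intro Z hZ hHitZ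
    obtain ⟨x, hxV, hxZ⟩ := Finset.exists_of_ssubset hZ
    have hCsub : (argsOf P \ r.bodyNeg) ∪ {x} ⊆ argsOf P := by
      intro b hb
      rcases Finset.mem_union.mp hb with h | h
      · exact (Finset.mem_sdiff.mp h).1
      · rw [Finset.mem_singleton] at h; subst h; exact hVsub hxV
    have hCHit : HitsVul P ((argsOf P \ r.bodyNeg) ∪ {x}) r.head := by
      rw [aux_hitsVul hP]
      intro r' hr' hh
      by_cases hx : x ∈ r'.bodyNeg
      · exact ⟨x, by simp, hx⟩
      · by_contra hcon
        push_neg at hcon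
        have hsubV : r'.bodyNeg ⊆ r.bodyNeg := by
          intro b hb
          by_contra hbV
          have hbA : b ∈ argsOf P := by rw [hargs]; exact aux_bodyNeg_sub hr' hb
          exact hcon b (Finset.mem_union_left _ (Finset.mem_sdiff.mpr ⟨hbA, hbV⟩)) hb
        have hss : r'.bodyNeg ⊂ r.bodyNeg := ⟨hsubV, fun hsup => hx (hsup hxV)⟩
        exact hP.2.2 r hr r' hr' hh hss
    obtain ⟨C', hC'sub, hC'hit, hC'min⟩ := aux_exists_min (Q := fun Y => HitsVul P Y r.head) _ hCHit
    have hatt : (setafOf P).att C' r.head := ⟨hC'sub.trans hCsub, hhead, hC'hit, hC'min⟩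
    obtain ⟨z, hzC', hzZ⟩ := hHitZ C' hatt
    have hzV : z ∈ r.bodyNeg := hZ.subset hzZ
    rcases Finset.mem_union.mp (hC'sub hzC') with h | h
    · exact (Finset.mem_sdiff.mp h).2 hzV
    · rw [Finset.mem_singleton] at h; subst h; exact hxZ hzZ

lemma aux_memVa_rule {P : NLP α} (hP : IsRFALP P) {a : α} {V : Finset α}
    (ha : a ∈ argsOf P) (hV : MemVa (setafOf P) a V) :
    ∃ r ∈ P, r.head = a ∧ r.bodyNeg = V := by
  have hargs := aux_args_eq hP
  obtain ⟨hVsub, hVhit, hVmin⟩ := hV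
  have hex : ∃ r ∈ P, r.head = a ∧ r.bodyNeg ⊆ V := by
    by_contra hcon
    push_neg at hcon
    have hCHit : HitsVul P (argsOf P \ V) a := by
      rw [aux_hitsVul hP]
      intro r hr hh
      have hns := hcon r hr hh
      rw [Finset.not_subset] at hns
      obtain ⟨b, hb1, hb2⟩ := hns
      have hbA : b ∈ argsOf P := by rw [hargs]; exact aux_bodyNeg_sub hr hb1
      exact ⟨b, Finset.mem_sdiff.mpr ⟨hbA, hb2⟩, hb1⟩
    obtain ⟨C', h1, h2, h3⟩ := aux_exists_min (Q := fun Y => HitsVul P Y a) _ hCHit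
    have hatt : (setafOf P).att C' a := ⟨h1.trans Finset.sdiff_subset, ha, h2, h3⟩
    obtain ⟨z, hz1, hz2⟩ := hVhit C' hatt
    exact (Finset.mem_sdiff.mp (h1 hz1)).2 hz2
  obtain ⟨r, hr, hh, hsub⟩ := hex
  subst hh
  have hrMem := aux_ruleMemVa hP hr
  by_cases heq : r.bodyNeg = V
  · exact ⟨r, hr, rfl, heq⟩
  · exact absurd hrMem.2.1
      (hVmin r.bodyNeg ⟨hsub, fun h => heq (Finset.Subset.antisymm hsub h)⟩)

end AuxStmt13

theorem stmt13 (P : NLP α) (hP : IsRFALP P) : nlpOf (setafOf P) = P := by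
  have hargs := aux_args_eq hP
  ext r
  simp only [nlpOf, Finset.mem_image, Finset.mem_filter, Finset.mem_product,
    Finset.mem_powerset]
  constructor
  · rintro ⟨⟨a, V⟩, ⟨⟨ha, hVs⟩, hMem⟩, rfl⟩
    obtain ⟨r', hr', hh, hN⟩ := aux_memVa_rule hP ha hMem
    have h0 := hP.1 r' hr'
    have hre : r' = ⟨a, ∅, V⟩ := by cases r'; simp_all
    rwa [hre] at hr'
  · intro hr
    refine ⟨(r.head, r.bodyNeg), ⟨⟨?_, ?_⟩, aux_ruleMemVa hP hr⟩, ?_⟩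
    · show r.head ∈ argsOf P
      rw [hargs]; exact aux_head_mem hr
    · show r.bodyNeg ⊆ argsOf P
      rw [hargs]; exact aux_bodyNeg_sub hr
    · have h0 := hP.1 r hr
      cases r; simp_all
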